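/- Let u : [0,1] → ℝ be bounded and twice differentiable at a point x in [0,1]. Then lim_{N→∞} N (u(x) − B_N[u](x)) = −x(1−x) u''(x)/2 (Voronovskaya-type limit). -/

import Mathlib

open Finset

noncomputable def bernsteinOp (N : ℕ) (u : ℝ → ℝ) (x : ℝ) : ℝ :=
  ∑ n ∈ Finset.range (N + 1), u (n / N) * (N.choose n) * x ^ n * (1 - x) ^ (N - n)

/-!
Split `u = P + R`, where `P` is the second-order Taylor polynomial of `u` at `x`. Expanding
`(n - N x)^k` in falling factorials and using `∑ₙ n^{(k)} b_{N,n} = N^{(k)} X^k`, the centred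
moments `B_N[(· - x)^k](x)` are `0`, `x(1-x)/N` and `O(N⁻²)` for `k = 1, 2, 4`, so
`N (u x - B_N[u](x)) = -x(1-x) u''(x)/2 - N B_N[R](x)`. The Taylor remainder is `o((y-x)²)` at `x`
(mean value theorem applied to `u'`) and bounded on `[0,1]`, hence
`|R y| ≤ ε (y-x)² + M δ⁻⁴ (y-x)⁴` there, and `N |B_N[R](x)| ≤ ε x(1-x) + M δ⁻⁴ / N`.
-/

open Polynomial Filter Topology Asymptotics Set

namespace bernsteinPolynomial

variable (R : Type*) [CommRing R]

theorem add_one_mul_add_one (M m : ℕ) :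
    ((m + 1 : ℕ) : R[X]) * bernsteinPolynomial R (M + 1) (m + 1)
      = ((M + 1 : ℕ) : R[X]) * X * bernsteinPolynomial R M m := by
  have h := congrArg (Nat.cast (R := R[X])) (Nat.add_one_mul_choose_eq M m)
  push_cast at h ⊢
  simp only [bernsteinPolynomial, Nat.add_sub_add_right]
  linear_combination (-(X ^ (m + 1) * (1 - X) ^ (M - m) : R[X])) * h

theorem sum_descFactorial_mul (N k : ℕ) :
    ∑ n ∈ range (N + 1), (n.descFactorial k : R[X]) * bernsteinPolynomial R N n
      = (N.descFactorial k : R[X]) * X ^ k := by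
  induction k generalizing N with
  | zero => simp [bernsteinPolynomial.sum]
  | succ k ih =>
    cases N with
    | zero => simp
    | succ M =>
      rw [sum_range_succ', Nat.zero_descFactorial_succ, Nat.cast_zero, zero_mul, add_zero]
      calc ∑ m ∈ range (M + 1),
            ((m + 1).descFactorial (k + 1) : R[X]) * bernsteinPolynomial R (M + 1) (m + 1)
          = ∑ m ∈ range (M + 1),
              ((M + 1 : ℕ) : R[X]) * X * ((m.descFactorial k : R[X]) * bernsteinPolynomial R M m) := by
            refine sum_congr rfl fun m _ => ?_
            rw [Nat.succ_descFactorial_succ, Nat.cast_mul, mul_right_comm, add_one_mul_add_one]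
            ring
        _ = ((M + 1).descFactorial (k + 1) : R[X]) * X ^ (k + 1) := by
            rw [← mul_sum, ih, Nat.succ_descFactorial_succ, Nat.cast_mul]
            ring

theorem sum_descFactorial_mul_eval (N k : ℕ) (x : R) :
    ∑ n ∈ range (N + 1), (n.descFactorial k : R) * (bernsteinPolynomial R N n).eval x
      = N.descFactorial k * x ^ k := by
  simpa [eval_finsetSum] using congrArg (eval x) (sum_descFactorial_mul R N k)

theorem sum_eval (N : ℕ) (x : R) :
    ∑ n ∈ range (N + 1), (bernsteinPolynomial R N n).eval x = 1 := by
  simpa [eval_finsetSum] using congrArg (eval x) (bernsteinPolynomial.sum R N)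

theorem sum_sub_mul_eval (N : ℕ) (x : R) :
    ∑ n ∈ range (N + 1), ((n : R) - N * x) * (bernsteinPolynomial R N n).eval x = 0 := by
  have h1 := sum_descFactorial_mul_eval R N 1 x
  simp only [Nat.descFactorial_one, pow_one] at h1
  simp only [sub_mul, sum_sub_distrib, h1, mul_assoc, ← mul_sum, sum_eval, mul_one, sub_self]

theorem sum_sub_sq_mul_eval (N : ℕ) (x : R) :
    ∑ n ∈ range (N + 1), ((n : R) - N * x) ^ 2 * (bernsteinPolynomial R N n).eval x
      = N * x * (1 - x) := by
  simpa [eval_finsetSum, sub_sq_comm] using congrArg (eval x) (bernsteinPolynomial.variance R N)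

theorem sum_sub_pow_four_mul_eval (N : ℕ) (x : R) :
    ∑ n ∈ range (N + 1), ((n : R) - N * x) ^ 4 * (bernsteinPolynomial R N n).eval x
      = N * x * (1 - x) * (1 + 3 * (N - 2) * x * (1 - x)) := by
  have hcast : ∀ n k : ℕ, (n.descFactorial k : R) = (descPochhammer R k).eval (n : R) :=
    fun n k => (descPochhammer_eval_eq_descFactorial R n k).symm
  have hexpand : ∀ n : ℕ, ((n : R) - N * x) ^ 4 = (n.descFactorial 4 : R)
      + (6 - 4 * (N * x)) * n.descFactorial 3
      + (7 - 12 * (N * x) + 6 * (N * x) ^ 2) * n.descFactorial 2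
      + (1 - 4 * (N * x) + 6 * (N * x) ^ 2 - 4 * (N * x) ^ 3) * n.descFactorial 1
      + (N * x) ^ 4 := by
    intro n
    simp only [hcast, descPochhammer_succ_eval, descPochhammer_zero, eval_one]
    push_cast
    ring
  simp only [hexpand, add_mul, mul_assoc, sum_add_distrib, ← mul_sum, sum_descFactorial_mul_eval,
    sum_eval]
  simp only [hcast, descPochhammer_succ_eval, descPochhammer_zero, eval_one]
  push_cast
  ring

theorem eval_nonneg {S : Type*} [CommRing S] [LinearOrder S] [IsStrictOrderedRing S]
    (N n : ℕ) {x : S} (hx : x ∈ Icc (0 : S) 1) : 0 ≤ (bernsteinPolynomial S N n).eval x := by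
  obtain ⟨hx0, hx1⟩ := hx
  have h1x : 0 ≤ 1 - x := sub_nonneg.2 hx1
  simp only [bernsteinPolynomial, eval_mul, eval_pow, eval_natCast, eval_X, eval_sub, eval_one]
  positivity

end bernsteinPolynomial

section bernsteinOp

variable {N : ℕ} {x : ℝ}

theorem bernsteinOp_eq_sum_eval (u : ℝ → ℝ) :
    bernsteinOp N u x = ∑ n ∈ range (N + 1), u (n / N) * (bernsteinPolynomial ℝ N n).eval x := by
  simp only [bernsteinOp, bernsteinPolynomial, eval_mul, eval_pow, eval_natCast, eval_X, eval_sub,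
    eval_one, mul_assoc]

theorem bernsteinOp_add (f g : ℝ → ℝ) :
    bernsteinOp N (fun y => f y + g y) x = bernsteinOp N f x + bernsteinOp N g x := by
  simp only [bernsteinOp_eq_sum_eval, add_mul, sum_add_distrib]

theorem bernsteinOp_const_mul (c : ℝ) (f : ℝ → ℝ) :
    bernsteinOp N (fun y => c * f y) x = c * bernsteinOp N f x := by
  simp only [bernsteinOp_eq_sum_eval, mul_sum, mul_assoc]

theorem bernsteinOp_const (c : ℝ) : bernsteinOp N (fun _ => c) x = c := by
  rw [bernsteinOp_eq_sum_eval, ← mul_sum, bernsteinPolynomial.sum_eval, mul_one]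

theorem bernsteinOp_sub_pow (hN : N ≠ 0) (j : ℕ) :
    bernsteinOp N (fun y => (y - x) ^ j) x
      = (∑ n ∈ range (N + 1), ((n : ℝ) - N * x) ^ j * (bernsteinPolynomial ℝ N n).eval x) / N ^ j := by
  rw [bernsteinOp_eq_sum_eval, sum_div]
  refine sum_congr rfl fun n _ => ?_
  rw [show (n : ℝ) / N - x = (n - N * x) / N by field_simp, div_pow]
  ring

theorem bernsteinOp_sub_eq_zero (hN : N ≠ 0) : bernsteinOp N (fun y => y - x) x = 0 := by
  simpa [bernsteinPolynomial.sum_sub_mul_eval] using bernsteinOp_sub_pow (x := x) hN 1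

theorem bernsteinOp_sub_sq (hN : N ≠ 0) :
    bernsteinOp N (fun y => (y - x) ^ 2) x = x * (1 - x) / N := by
  rw [bernsteinOp_sub_pow hN, bernsteinPolynomial.sum_sub_sq_mul_eval]
  field_simp

theorem bernsteinOp_sub_pow_four_le (hN : N ≠ 0) (hx : x ∈ Icc (0 : ℝ) 1) :
    bernsteinOp N (fun y => (y - x) ^ 4) x ≤ 1 / N ^ 2 := by
  have hN1 : (1 : ℝ) ≤ N := by exact_mod_cast Nat.one_le_iff_ne_zero.2 hN
  have hq0 : 0 ≤ x * (1 - x) := mul_nonneg hx.1 (sub_nonneg.2 hx.2)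
  have hq : x * (1 - x) ≤ 1 / 4 := by nlinarith [sq_nonneg (x - 1 / 2)]
  have hpoly : x * (1 - x) * (1 + 3 * (N - 2) * (x * (1 - x))) ≤ N := by
    nlinarith [mul_le_mul hq hq hq0 (by norm_num), mul_nonneg hq0 hq0]
  rw [bernsteinOp_sub_pow hN, bernsteinPolynomial.sum_sub_pow_four_mul_eval,
    div_le_div_iff₀ (by positivity) (by positivity)]
  calc (N : ℝ) * x * (1 - x) * (1 + 3 * (N - 2) * x * (1 - x)) * N ^ 2
      = (N : ℝ) ^ 3 * (x * (1 - x) * (1 + 3 * (N - 2) * (x * (1 - x)))) := by ring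
    _ ≤ (N : ℝ) ^ 3 * N := by gcongr
    _ = 1 * (N : ℝ) ^ 4 := by ring

theorem bernsteinOp_quadratic_add (hN : N ≠ 0) (a b c : ℝ) (R : ℝ → ℝ) :
    bernsteinOp N (fun y => a + b * (y - x) + c * (y - x) ^ 2 + R y) x
      = a + c * (x * (1 - x) / N) + bernsteinOp N R x := by
  rw [bernsteinOp_add, bernsteinOp_add, bernsteinOp_add, bernsteinOp_const_mul, bernsteinOp_const_mul,
    bernsteinOp_const, bernsteinOp_sub_eq_zero hN, bernsteinOp_sub_sq hN, mul_zero, add_zero]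

theorem mul_sub_bernsteinOp (hN : N ≠ 0) (u : ℝ → ℝ) (b c : ℝ) :
    N * (u x - bernsteinOp N u x) = -(x * (1 - x)) * c
      - N * bernsteinOp N (fun y => u y - (u x + b * (y - x) + c * (y - x) ^ 2)) x := by
  have h := bernsteinOp_quadratic_add (x := x) hN (u x) b c
    (fun y => u y - (u x + b * (y - x) + c * (y - x) ^ 2))
  simp only [add_sub_cancel] at h
  have hN' : (N : ℝ) * (x * (1 - x) / N) = x * (1 - x) := mul_div_cancel₀ _ (Nat.cast_ne_zero.2 hN)
  rw [h]
  linear_combination (-c) * hN'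

theorem abs_bernsteinOp_le {f g : ℝ → ℝ} (hx : x ∈ Icc (0 : ℝ) 1)
    (hfg : ∀ y ∈ Icc (0 : ℝ) 1, |f y| ≤ g y) : |bernsteinOp N f x| ≤ bernsteinOp N g x := by
  simp only [bernsteinOp_eq_sum_eval]
  refine (abs_sum_le_sum_abs _ _).trans (sum_le_sum fun n hn => ?_)
  have hw := bernsteinPolynomial.eval_nonneg N n hx
  rw [abs_mul, abs_of_nonneg hw]
  refine mul_le_mul_of_nonneg_right (hfg _ ⟨by positivity, div_le_one_of_le₀ ?_ (by positivity)⟩) hw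
  exact_mod_cast Nat.lt_succ_iff.1 (mem_range.1 hn)

end bernsteinOp

theorem taylor_isLittleO_two_of_differentiableAt {E : Type*} [NormedAddCommGroup E] [NormedSpace ℝ E]
    {u : ℝ → E} {x : ℝ} (hd : ∀ᶠ y in 𝓝 x, DifferentiableAt ℝ u y)
    (hd2 : DifferentiableAt ℝ (deriv u) x) :
    (fun y => u y - u x - (y - x) • deriv u x - ((y - x) ^ 2 / 2) • deriv (deriv u) x)
      =o[𝓝 x] fun y => (y - x) ^ 2 := by
  obtain ⟨r, hr, hball⟩ := Metric.eventually_nhds_iff_ball.1 hd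
  have hderiv : ∀ y ∈ Metric.ball x r, HasDerivWithinAt
      (fun y => u y - u x - (y - x) • deriv u x - ((y - x) ^ 2 / 2) • deriv (deriv u) x)
      (deriv u y - deriv u x - (y - x) • deriv (deriv u) x) (Metric.ball x r) y := by
    intro y hy
    have hlin := ((hasDerivAt_id y).sub_const x).smul_const (deriv u x)
    have hsq := ((((hasDerivAt_id y).sub_const x).pow 2).div_const 2).smul_const (deriv (deriv u) x)
    refine ((((hball y hy).hasDerivAt.sub_const (u x)).sub hlin).sub hsq).hasDerivWithinAt.congr_deriv ?_
    simp only [id_eq, one_smul, Nat.cast_ofNat]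
    congr 2
    ring_nf
  have hlo : (fun y => deriv u y - deriv u x - (y - x) • deriv (deriv u) x)
      =o[𝓝[Metric.ball x r] x] fun y => (y - x) ^ 1 := by
    simpa using (hasDerivAt_iff_isLittleO.1 hd2.hasDerivAt).mono nhdsWithin_le_nhds
  have h := (convex_ball x r).isLittleO_pow_succ_real (Metric.mem_ball_self hr) hderiv hlo
  rw [Metric.isOpen_ball.nhdsWithin_eq (Metric.mem_ball_self hr)] at h
  simpa using h

theorem le_mul_sq_add_div_mul_pow_four {a t ε δ M : ℝ} (hε : 0 ≤ ε) (hδ : 0 < δ) (hM0 : 0 ≤ M)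
    (hM : a ≤ M) (hnear : |t| < δ → a ≤ ε * t ^ 2) : a ≤ ε * t ^ 2 + M / δ ^ 4 * t ^ 4 := by
  by_cases ht : |t| < δ
  · have : 0 ≤ M / δ ^ 4 * t ^ 4 := by positivity
    linarith [hnear ht]
  · have hδ4 : δ ^ 4 ≤ t ^ 4 := by
      simpa only [(show Even 4 by decide).pow_abs] using pow_le_pow_left₀ hδ.le (not_lt.1 ht) 4
    have : M ≤ M / δ ^ 4 * t ^ 4 := by
      rw [div_mul_eq_mul_div, le_div_iff₀ (by positivity)]
      exact mul_le_mul_of_nonneg_left hδ4 hM0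
    linarith [mul_nonneg hε (sq_nonneg t)]

theorem tendsto_mul_bernsteinOp_of_isLittleO {R : ℝ → ℝ} {x : ℝ} (hx : x ∈ Icc (0 : ℝ) 1)
    (hR : R =o[𝓝 x] fun y => (y - x) ^ 2) (hb : ∃ M, ∀ y ∈ Icc (0 : ℝ) 1, |R y| ≤ M) :
    Tendsto (fun N : ℕ => N * bernsteinOp N R x) atTop (𝓝 0) := by
  obtain ⟨M, hM⟩ := hb
  have hM0 : 0 ≤ M := (abs_nonneg _).trans (hM x hx)
  rw [Metric.tendsto_nhds]
  intro ε hε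
  obtain ⟨δ, hδ, hnear⟩ := Metric.eventually_nhds_iff.1 (hR.def (half_pos hε))
  have hbound : ∀ y ∈ Icc (0 : ℝ) 1, |R y| ≤ ε / 2 * (y - x) ^ 2 + M / δ ^ 4 * (y - x) ^ 4 :=
    fun y hy => le_mul_sq_add_div_mul_pow_four (half_pos hε).le hδ hM0 (hM y hy) fun hy' => by
      simpa only [Real.norm_eq_abs, abs_pow, sq_abs] using hnear (by rwa [Real.dist_eq])
  filter_upwards [(tendsto_const_div_atTop_nhds_zero_nat (M / δ ^ 4)).eventually
    (gt_mem_nhds (half_pos hε)), eventually_ne_atTop 0] with N hsmall hN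
  have hB := abs_bernsteinOp_le (N := N) hx hbound
  rw [bernsteinOp_add, bernsteinOp_const_mul, bernsteinOp_const_mul, bernsteinOp_sub_sq hN] at hB
  have h4 := bernsteinOp_sub_pow_four_le hN hx
  have hq : x * (1 - x) ≤ 1 := by nlinarith [hx.1, hx.2]
  have hN0 : (0 : ℝ) < N := by positivity
  rw [Real.dist_eq, sub_zero, abs_mul, Nat.abs_cast]
  calc (N : ℝ) * |bernsteinOp N R x|
      ≤ N * (ε / 2 * (x * (1 - x) / N) + M / δ ^ 4 * (1 / N ^ 2)) := by
        gcongr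
        exact hB.trans (by gcongr)
    _ = ε / 2 * (x * (1 - x)) + M / δ ^ 4 / N := by field_simp
    _ < ε := by nlinarith

theorem bernstein_voronovskaya (u : ℝ → ℝ) (x : ℝ) (hx : x ∈ Set.Icc (0:ℝ) 1)
    (hb : ∃ C, ∀ y ∈ Set.Icc (0:ℝ) 1, |u y| ≤ C)
    (hd : ∀ᶠ y in nhds x, DifferentiableAt ℝ u y)
    (hd2 : DifferentiableAt ℝ (deriv u) x) :
    Filter.Tendsto (fun N : ℕ => (N : ℝ) * (u x - bernsteinOp N u x))
      Filter.atTop (nhds (-(x * (1 - x)) / 2 * deriv (deriv u) x)) := by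
  set P : ℝ → ℝ := fun y => u x + deriv u x * (y - x) + deriv (deriv u) x / 2 * (y - x) ^ 2
  have hRo : (fun y => u y - P y) =o[𝓝 x] fun y => (y - x) ^ 2 := by
    refine (taylor_isLittleO_two_of_differentiableAt hd hd2).congr_left fun y => ?_
    simp only [P, smul_eq_mul]
    ring
  have hRb : ∃ M, ∀ y ∈ Icc (0 : ℝ) 1, |u y - P y| ≤ M := by
    obtain ⟨C, hC⟩ := hb
    obtain ⟨C', hC'⟩ := isCompact_Icc.exists_bound_of_continuousOn (f := P) (by fun_prop)
    exact ⟨C + C', fun y hy => (abs_sub _ _).trans (add_le_add (hC y hy) (hC' y hy))⟩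
  have hlim := (tendsto_mul_bernsteinOp_of_isLittleO hx hRo hRb).const_sub
    (-(x * (1 - x)) / 2 * deriv (deriv u) x)
  rw [sub_zero] at hlim
  refine hlim.congr' ?_
  filter_upwards [eventually_ne_atTop 0] with N hN
  rw [mul_sub_bernsteinOp hN u (deriv u x) (deriv (deriv u) x / 2)]
  ring
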